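/- For every integer r ≥ 1, the tree T_r has burning number b(T_r) = r + 1, where T_1 is the tree on 2 vertices and, for r ≥ 2, T_r is the tree obtained from the perfect binary tree of depth r−1 by attaching one new leaf to each of its 2^{r−1} leaves. -/

import Mathlib

/-- `ball G u k` is `N^k[u]`: the set of vertices `v` reachable from `u`
with `dist_G(u,v) ≤ k`. -/
def ball {V : Type*} (G : SimpleGraph V) (u : V) (k : ℕ) : Set V :=
  {v | G.Reachable u v ∧ G.dist u v ≤ k}

/-- The burning number of `G`: the minimum length `k` of a sequence
`(x_1, …, x_k)` of vertices with `V(G) = N^{k-1}[x_1] ∪ ⋯ ∪ N^0[x_k]`. -/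
noncomputable def burningNumber {V : Type*} (G : SimpleGraph V) : ℕ :=
  sInf {k | ∃ x : Fin k → V, ∀ v : V, ∃ i : Fin k, v ∈ ball G (x i) (k - 1 - (i : ℕ))}

/-- The vertex type of the tree `T_r`: binary strings of length at most `r`
(a string is the sequence of child-choices from the root, most recent first),
where strings of length exactly `r` correspond to the unique new leaf attached to
each leaf of the perfect binary tree of depth `r - 1`, encoded by the choice `false`. -/
abbrev TrVert (r : ℕ) : Type :=
  {l : List Bool // l.length ≤ r ∧ (l.length = r → l.head? = some false)}

/-- The tree `T_r`: for `r = 1` it is the tree of order `2`, and for `r ≥ 2` it arises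
from the perfect binary tree of depth `r - 1` by attaching a new leaf to each of its
`2 ^ (r - 1)` leaves. Two vertices are adjacent iff one is a child of the other. -/
def Tr (r : ℕ) : SimpleGraph (TrVert r) where
  Adj a b := (∃ c : Bool, (b : List Bool) = c :: (a : List Bool)) ∨
             (∃ c : Bool, (a : List Bool) = c :: (b : List Bool))
  symm := ⟨fun a b h => h.symm⟩
  loopless := by
    constructor
    intro a h
    have : (a : List Bool).length = (a : List Bool).length + 1 := by
      rcases h with ⟨c, h⟩ | ⟨c, h⟩ <;> simpa using congrArg List.length h
    omega

/-!
The root reaches every vertex of `T_r` within `r` steps, so `b(T_r) ≤ r + 1`. For the lower bound,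
call a vertex deep if its depth is `r - 1` or `r`; there are `2 ^ r` of them. A ball of radius
`ρ < r` contains at most `2 ^ ρ` deep vertices: if its centre has depth at least `r - ρ`, they all
lie below the centre's ancestor at depth `r - ρ`; otherwise they are descendants of the centre at
depth `r - 1`, and the centre has depth `r - 1 - ρ`. So a burning sequence of length `k ≤ r` covers
at most `2 ^ (k - 1) + ⋯ + 2 + 1 < 2 ^ r` deep vertices.
-/

namespace SimpleGraph

variable {V : Type*} {G : SimpleGraph V}

theorem Walk.apply_le_apply_add_length {f : V → ℤ} (hf : ∀ x y, G.Adj x y → f x ≤ f y + 1) :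
    ∀ {u v : V} (p : G.Walk u v), f u ≤ f v + p.length
  | _, _, .nil => by simp
  | _, _, .cons h p => by
    have := hf _ _ h
    have := p.apply_le_apply_add_length hf
    rw [Walk.length_cons]
    push_cast
    omega

theorem Reachable.apply_le_apply_add_dist {f : V → ℤ} (hf : ∀ x y, G.Adj x y → f x ≤ f y + 1)
    {u v : V} (h : G.Reachable u v) : f u ≤ f v + G.dist u v := by
  obtain ⟨p, hp⟩ := h.exists_walk_length_eq_dist
  simpa [hp] using p.apply_le_apply_add_length hf

end SimpleGraph

section Burning

variable {V : Type*} {G : SimpleGraph V}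

def IsBurningSeq (G : SimpleGraph V) {k : ℕ} (x : Fin k → V) : Prop :=
  ∀ v : V, ∃ i : Fin k, v ∈ ball G (x i) (k - 1 - (i : ℕ))

theorem burningNumber_le {k : ℕ} {x : Fin k → V} (hx : IsBurningSeq G x) : burningNumber G ≤ k :=
  Nat.sInf_le ⟨x, hx⟩

theorem le_burningNumber {n k : ℕ} {x : Fin k → V} (hx : IsBurningSeq G x)
    (h : ∀ (m : ℕ) (y : Fin m → V), IsBurningSeq G y → n ≤ m) : n ≤ burningNumber G :=
  le_csInf ⟨k, x, hx⟩ fun m ⟨y, hy⟩ => h m y hy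

theorem isBurningSeq_const {c : V} {R : ℕ} (h : ∀ v, v ∈ ball G c R) :
    IsBurningSeq G (fun _ : Fin (R + 1) => c) :=
  fun v => ⟨0, by simpa using h v⟩

theorem IsBurningSeq.ncard_le_sum {k : ℕ} {x : Fin k → V} (hx : IsBurningSeq G x) (D : Set V) :
    D.ncard ≤ ∑ i, (D ∩ ball G (x i) (k - 1 - (i : ℕ))).ncard := by
  have hD : ⋃ i, D ∩ ball G (x i) (k - 1 - (i : ℕ)) = D := by
    rw [← Set.inter_iUnion, Set.inter_eq_left]
    intro v _
    simpa using hx v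
  calc D.ncard = (⋃ i, D ∩ ball G (x i) (k - 1 - (i : ℕ))).ncard := by rw [hD]
    _ ≤ _ := Set.ncard_iUnion_le_of_fintype _

end Burning

theorem List.ncard_setOf_length_eq_and_suffix {α : Type*} [Fintype α] (a : List α) {n : ℕ}
    (h : a.length ≤ n) :
    {l : List α | l.length = n ∧ a <:+ l}.ncard = Fintype.card α ^ (n - a.length) := by
  have himage : {l : List α | l.length = n ∧ a <:+ l} =
      (· ++ a) '' {p : List α | p.length = n - a.length} := by
    ext l
    constructor
    · rintro ⟨hl, p, rfl⟩
      exact ⟨p, by simp at hl; simp; omega, rfl⟩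
    · rintro ⟨p, hp, rfl⟩
      exact ⟨by simp at hp ⊢; omega, List.suffix_append p a⟩
  rw [himage, Set.ncard_image_of_injective _ (List.append_left_injective a),
    ← Nat.card_coe_set_eq]
  exact (Nat.card_eq_fintype_card (α := List.Vector α (n - a.length))).trans (card_vector _)

theorem Fin.sum_two_pow_sub_lt (k : ℕ) : ∑ i : Fin k, 2 ^ (k - 1 - (i : ℕ)) < 2 ^ k := by
  rw [Fin.sum_univ_eq_sum_range (fun i => 2 ^ (k - 1 - i)),
    Finset.sum_range_reflect (fun j => 2 ^ j) k]
  exact Nat.geomSum_lt le_rfl fun _ => Finset.mem_range.mp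

namespace Tr

variable {r : ℕ}

instance : Finite (TrVert r) :=
  ((List.finite_length_le Bool r).subset fun _ h => h.1).to_subtype

def root (hr : 1 ≤ r) : TrVert r :=
  ⟨[], Nat.zero_le r, fun h => absurd h (by simp; omega)⟩

theorem exists_walk_root (hr : 1 ≤ r) (v : TrVert r) :
    ∃ p : (Tr r).Walk (root hr) v, p.length = (v : List Bool).length := by
  obtain ⟨l, hl⟩ := v
  induction l with
  | nil => exact ⟨.nil, rfl⟩
  | cons c l ih =>
    have hl' : l.length ≤ r ∧ (l.length = r → l.head? = some false) :=
      ⟨by simp at hl; omega, fun h => by simp at hl; omega⟩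
    obtain ⟨p, hp⟩ := ih hl'
    have hadj : (Tr r).Adj ⟨l, hl'⟩ ⟨c :: l, hl⟩ := Or.inl ⟨c, rfl⟩
    exact ⟨p.concat hadj, by rw [SimpleGraph.Walk.length_concat, hp]; rfl⟩

theorem mem_ball_root (hr : 1 ≤ r) (v : TrVert r) : v ∈ ball (Tr r) (root hr) r := by
  obtain ⟨p, hp⟩ := exists_walk_root hr v
  exact ⟨⟨p⟩, (SimpleGraph.dist_le p).trans (hp.trans_le v.2.1)⟩

/-- Vertices list their child choices most recent first, so the subtree rooted at `a` consists of
the lists with suffix `a`. Inside it this is the depth, outside it the depth reflected through the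
parent of `a`; it changes by at most `1` along an edge, hence bounds distances from below. -/
def subtreePotential (a x : List Bool) : ℤ :=
  if a <:+ x then x.length else 2 * a.length - 2 - x.length

theorem subtreePotential_cons (a x : List Bool) (c : Bool) :
    subtreePotential a x ≤ subtreePotential a (c :: x) + 1 ∧
      subtreePotential a (c :: x) ≤ subtreePotential a x + 1 := by
  simp only [subtreePotential, List.suffix_cons_iff]
  split_ifs with h₁ h₂ h₂ <;> simp_all <;> omega

theorem subtreePotential_le_of_adj (a : List Bool) {x y : TrVert r} (h : (Tr r).Adj x y) :
    subtreePotential a x ≤ subtreePotential a y + 1 := by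
  rcases h with ⟨c, hc⟩ | ⟨c, hc⟩
  · exact hc ▸ (subtreePotential_cons a x c).1
  · exact hc ▸ (subtreePotential_cons a y c).2

theorem suffix_of_mem_ball {a : List Bool} {u v : TrVert r} {ρ : ℕ} (hv : v ∈ ball (Tr r) u ρ)
    (ha : a <:+ u) (hρ : ρ + 2 * a.length < (u : List Bool).length + (v : List Bool).length + 2) :
    a <:+ (v : List Bool) := by
  by_contra hav
  have := hv.1.apply_le_apply_add_dist fun _ _ => subtreePotential_le_of_adj a
  simp only [subtreePotential, ha, hav, if_true, if_false] at this
  have := hv.2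
  omega

theorem length_le_of_mem_ball {u v : TrVert r} {ρ : ℕ} (hv : v ∈ ball (Tr r) u ρ) :
    (v : List Bool).length ≤ (u : List Bool).length + ρ := by
  have := hv.1.symm.apply_le_apply_add_dist fun _ _ => subtreePotential_le_of_adj []
  simp only [subtreePotential, List.nil_suffix, if_true, SimpleGraph.dist_comm] at this
  have := hv.2
  omega

def deep (r : ℕ) : Set (TrVert r) :=
  {v | r - 1 ≤ (v : List Bool).length}

/-- Identifies the deep vertices with the binary strings of length `r`. -/
def lift (v : TrVert r) : List Bool :=
  if (v : List Bool).length = r then v else true :: v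

theorem lift_injective : Function.Injective (lift (r := r)) := by
  intro v w h
  have hv := v.2.2
  have hw := w.2.2
  unfold lift at h
  apply Subtype.ext
  split_ifs at h with h₁ h₂ h₂
  · exact h
  · have := hv h₁
    simp [h] at this
  · have := hw h₂
    simp [← h] at this
  · exact List.cons_injective h

theorem length_lift {v : TrVert r} (hv : v ∈ deep r) : (lift v).length = r := by
  have := v.2.1
  unfold lift deep at *
  split_ifs <;> simp at * <;> omega

theorem suffix_lift (v : TrVert r) : (v : List Bool) <:+ lift v := by
  unfold lift
  split_ifs
  · exact List.suffix_refl _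
  · exact List.suffix_cons _ _

theorem surjOn_lift (hr : 1 ≤ r) : Set.SurjOn lift (deep r) {l | l.length = r} := by
  rintro (_ | ⟨_ | _, l⟩) (hl : List.length _ = r) <;> simp only [List.length_cons,
    List.length_nil] at hl
  · omega
  · refine ⟨⟨false :: l, by simp; omega, fun _ => rfl⟩, by simp [deep]; omega, ?_⟩
    exact if_pos (by simp; omega)
  · refine ⟨⟨l, by omega, fun h => by omega⟩, by simp [deep]; omega, ?_⟩
    exact if_neg (by simp; omega)

theorem two_pow_le_ncard_deep (hr : 1 ≤ r) : 2 ^ r ≤ (deep r).ncard := by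
  have := List.ncard_setOf_length_eq_and_suffix (α := Bool) [] (Nat.zero_le r)
  simp only [List.nil_suffix, and_true, Fintype.card_bool, List.length_nil, Nat.sub_zero] at this
  calc 2 ^ r = {l : List Bool | l.length = r}.ncard := this.symm
    _ ≤ (lift '' deep r).ncard := Set.ncard_le_ncard (surjOn_lift hr)
    _ ≤ (deep r).ncard := Set.ncard_image_le

theorem ncard_deep_inter_ball_le_of_le (u : TrVert r) {ρ : ℕ} (hρ : ρ < r)
    (hu : r - ρ ≤ (u : List Bool).length) : (deep r ∩ ball (Tr r) u ρ).ncard ≤ 2 ^ ρ := by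
  set a := (u : List Bool).drop ((u : List Bool).length - (r - ρ))
  have ha : a <:+ u := List.drop_suffix _ _
  have hlen : a.length = r - ρ := by simp [a]; omega
  calc _ ≤ {l : List Bool | l.length = r ∧ a <:+ l}.ncard := by
        refine Set.ncard_le_ncard_of_injOn lift ?_ lift_injective.injOn
          ((List.finite_length_eq Bool r).subset fun _ h => h.1)
        rintro v ⟨hd, hb⟩
        have : r - 1 ≤ (v : List Bool).length := hd
        exact ⟨length_lift hd, (suffix_of_mem_ball hb ha (by omega)).trans (suffix_lift v)⟩
    _ = 2 ^ ρ := by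
        rw [List.ncard_setOf_length_eq_and_suffix a (by omega), hlen, Fintype.card_bool]
        congr 1
        omega

theorem ncard_deep_inter_ball_le_of_lt (u : TrVert r) {ρ : ℕ}
    (hu : (u : List Bool).length < r - ρ) : (deep r ∩ ball (Tr r) u ρ).ncard ≤ 2 ^ ρ := by
  have hsub : ∀ v ∈ deep r ∩ ball (Tr r) u ρ,
      (v : List Bool).length = r - 1 ∧ (u : List Bool) <:+ v := by
    rintro v ⟨hd, hb⟩
    have : r - 1 ≤ (v : List Bool).length := hd
    have := length_le_of_mem_ball hb
    exact ⟨by omega, suffix_of_mem_ball hb (List.suffix_refl _) (by omega)⟩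
  rcases (deep r ∩ ball (Tr r) u ρ).eq_empty_or_nonempty with hempty | ⟨v, hv⟩
  · simp [hempty]
  have := length_le_of_mem_ball hv.2
  have := (hsub v hv).1
  calc _ ≤ {l : List Bool | l.length = r - 1 ∧ (u : List Bool) <:+ l}.ncard :=
        Set.ncard_le_ncard_of_injOn Subtype.val hsub Subtype.val_injective.injOn
          ((List.finite_length_eq Bool _).subset fun _ h => h.1)
    _ = 2 ^ (r - 1 - (u : List Bool).length) := by
        rw [List.ncard_setOf_length_eq_and_suffix _ (by omega), Fintype.card_bool]
    _ ≤ 2 ^ ρ := Nat.pow_le_pow_right two_pos (by omega)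

theorem ncard_deep_inter_ball_le (u : TrVert r) {ρ : ℕ} (hρ : ρ < r) :
    (deep r ∩ ball (Tr r) u ρ).ncard ≤ 2 ^ ρ := by
  rcases le_or_gt (r - ρ) (u : List Bool).length with hu | hu
  -- the deep vertices of the ball lie below the ancestor of `u` at depth `r - ρ`
  · exact ncard_deep_inter_ball_le_of_le u hρ hu
  -- the deep vertices of the ball are descendants of `u` at depth `r - 1`
  · exact ncard_deep_inter_ball_le_of_lt u hu

theorem succ_le_of_isBurningSeq (hr : 1 ≤ r) {k : ℕ} {x : Fin k → TrVert r}
    (hx : IsBurningSeq (Tr r) x) : r + 1 ≤ k := by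
  by_contra! hk
  have : 2 ^ r < 2 ^ r := calc
    2 ^ r ≤ (deep r).ncard := two_pow_le_ncard_deep hr
    _ ≤ ∑ i, (deep r ∩ ball (Tr r) (x i) (k - 1 - (i : ℕ))).ncard := hx.ncard_le_sum _
    _ ≤ ∑ i : Fin k, 2 ^ (k - 1 - (i : ℕ)) :=
        Finset.sum_le_sum fun i _ => ncard_deep_inter_ball_le _ (by omega)
    _ < 2 ^ k := Fin.sum_two_pow_sub_lt k
    _ ≤ 2 ^ r := Nat.pow_le_pow_right two_pos (by omega)
  exact lt_irrefl _ this

end Tr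

theorem burning_Tr (r : ℕ) (hr : 1 ≤ r) : burningNumber (Tr r) = r + 1 :=
  have hroot := isBurningSeq_const (Tr.mem_ball_root hr)
  le_antisymm (burningNumber_le hroot)
    (le_burningNumber hroot fun _ _ => Tr.succ_le_of_isBurningSeq hr)
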